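/- The 'globally' interface for the weak tag property is valid in the running example: with A(n) = Globally(⊤), A(w) = Globally({s : s ≠ none → s.lp = 100}), and A(v) = A(d) = A(e) = Globally({s : s = none ∨ s.tag = true}), every node satisfies the initial and inductive conditions; hence at every time t, if e's simulated route is not none then it is tagged internal. -/
import Mathlib


/-- A network instance: in-neighbors, initial routes, edge transfer functions
and a merge (selection) function. -/
structure Network (V : Type) (S : Type) where
  pred : V → List V
  init : V → S
  T : V → V → S → S
  merge : S → S → S

/-- The route computed at `v` from neighbor states `s`:
`init v` merged with the transferred routes of the in-neighbors. -/
def mergedState {V S : Type} (N : Network V S) (v : V) (s : V → S) : S :=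
  (N.pred v).foldr (fun u acc => N.merge (N.T u v (s u)) acc) (N.init v)

/-- The synchronous simulation state. -/
def sim {V S : Type} (N : Network V S) : ℕ → V → S
  | 0, v => N.init v
  | t + 1, v => mergedState N v (sim N t)

/-- Initial verification condition. -/
def InitCond {V S : Type} (N : Network V S) (A : V → ℕ → Set S) : Prop :=
  ∀ v, N.init v ∈ A v 0

/-- Inductive verification condition. -/
def IndCond {V S : Type} (N : Network V S) (A : V → ℕ → Set S) : Prop :=
  ∀ v (t : ℕ) (s : V → S), (∀ u ∈ N.pred v, s u ∈ A u t) →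
    mergedState N v s ∈ A v (t + 1)

/-- The `globally` temporal operator. -/
def Globally {S : Type} (φ : Set S) : ℕ → Set S := fun _ => φ

/-- The `until` temporal operator with witness time `τ`. -/
def UntilOp {S : Type} (τ : ℕ) (φ : Set S) (Q : ℕ → Set S) : ℕ → Set S :=
  fun t => if t < τ then φ else Q t

/-- The `finally` temporal operator with witness time `τ`. -/
def FinallyOp {S : Type} (τ : ℕ) (Q : ℕ → Set S) : ℕ → Set S :=
  UntilOp τ Set.univ Q

/-- Nodes of the running five-node example network. -/
inductive Node | n | w | v | d | e
deriving DecidableEq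

/-- A concrete route record: local preference, path length, internal tag. -/
structure R where
  lp : ℕ
  len : ℕ
  tag : Bool
deriving DecidableEq

/-- Routes are optional records; `none` is the absence of a route. -/
abbrev Route := Option R

/-- Increment path length across an edge. -/
def incr (r : Route) : Route := r.map fun x => { x with len := x.len + 1 }

/-- Edge transfer functions: every edge increments `len`; `wv` sets the tag;
`nv` drops all routes; `de` drops untagged routes. -/
def transfer : Node → Node → Route → Route
  | .n, .v, _ => none
  | .w, .v, r => (incr r).map fun x => { x with tag := true }
  | .d, .e, r =>
      match incr r with
      | some x => if x.tag then some x else none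
      | none => none
  | _, _, r => incr r

/-- Merge: `none` is identity; prefer higher local preference, then shorter length. -/
def rmerge : Route → Route → Route
  | none, b => b
  | some a, none => some a
  | some a, some b =>
      if b.lp < a.lp then some a
      else if a.lp < b.lp then some b
      else if a.len ≤ b.len then some a else some b

/-- In-neighbors: edges nv, wv, vd, dv, de. -/
def epreds : Node → List Node
  | .v => [.n, .w, .d]
  | .d => [.v]
  | .e => [.d]
  | _ => []

/-- Initial routes: `w` has a route with lp 100; all others have none. -/
def exInit : Node → Route
  | .w => some ⟨100, 0, false⟩
  | _ => none

/-- The running example network instance. -/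
def exNet : Network Node Route := ⟨epreds, exInit, transfer, rmerge⟩

/-- The weak 'globally' tag interface for the running example. -/
def A17 : Node → ℕ → Set Route
  | .n => Globally Set.univ
  | .w => Globally {s | ∀ r, s = some r → r.lp = 100}
  | _ => Globally {s | s = none ∨ ∃ r, s = some r ∧ r.tag = true}

def Tg (s : Route) : Prop := s = none ∨ ∃ r, s = some r ∧ r.tag = true

lemma tg_merge {a b : Route} (ha : Tg a) (hb : Tg b) : Tg (rmerge a b) := by
  rcases ha with ha | ⟨ra, ha, hta⟩ <;> rcases hb with hb | ⟨rb, hb, htb⟩ <;> subst_vars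
  · exact Or.inl rfl
  · exact Or.inr ⟨rb, rfl, htb⟩
  · exact Or.inr ⟨ra, rfl, hta⟩
  · show Tg (if rb.lp < ra.lp then some ra else if ra.lp < rb.lp then some rb
      else if ra.len ≤ rb.len then some ra else some rb)
    split_ifs <;> [exact Or.inr ⟨ra, rfl, hta⟩; exact Or.inr ⟨rb, rfl, htb⟩;
      exact Or.inr ⟨ra, rfl, hta⟩; exact Or.inr ⟨rb, rfl, htb⟩]

lemma tg_incr {a : Route} (ha : Tg a) : Tg (incr a) := by
  rcases ha with ha | ⟨ra, ha, hta⟩ <;> subst_vars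
  · exact Or.inl rfl
  · exact Or.inr ⟨_, rfl, hta⟩

lemma ic : InitCond exNet A17 := by
  intro v
  cases v <;> simp [exNet, exInit, A17, Globally, Set.mem_setOf_eq]

lemma indc : IndCond exNet A17 := by
  intro v t s hs
  cases v
  · trivial
  · -- w : no preds, mergedState = init w
    simp [mergedState, exNet, epreds, exInit, A17, Globally, Set.mem_setOf_eq]
  · -- v : preds n w d
    have hw := hs Node.w (by simp [exNet, epreds])
    have hd := hs Node.d (by simp [exNet, epreds])
    show Tg _
    simp only [mergedState, exNet, epreds, List.foldr, exInit]
    apply tg_merge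
    · exact Or.inl rfl
    apply tg_merge
    · rcases s Node.w with _ | r
      · exact Or.inl rfl
      · exact Or.inr ⟨_, rfl, rfl⟩
    apply tg_merge
    · exact tg_incr hd
    · exact Or.inl rfl
  · -- d : pred v
    have hv := hs Node.v (by simp [exNet, epreds])
    show Tg _
    simp only [mergedState, exNet, epreds, List.foldr, exInit]
    exact tg_merge (tg_incr hv) (Or.inl rfl)
  · -- e : pred d
    have hd := hs Node.d (by simp [exNet, epreds])
    show Tg _
    simp only [mergedState, exNet, epreds, List.foldr, exInit]
    apply tg_merge _ (Or.inl rfl)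
    show Tg (transfer Node.d Node.e (s Node.d))
    rcases tg_incr hd with h | ⟨r, h, ht⟩
    · left; simp only [transfer]; rw [h]
    · right; exact ⟨r, by simp only [transfer]; rw [h]; simp [ht], ht⟩

lemma sound {V S : Type} (N : Network V S) (A : V → ℕ → Set S)
    (h0 : InitCond N A) (h1 : IndCond N A) : ∀ t v, sim N t v ∈ A v t := by
  intro t
  induction t with
  | zero => exact h0
  | succ t ih => intro v; exact h1 v t _ (fun u _ => ih u)

/-- The weak tag interface is valid, so e's route, if present, is tagged. -/
theorem weak_tag_valid :
    InitCond exNet A17 ∧ IndCond exNet A17 ∧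
      (∀ t : ℕ, sim exNet t Node.e = none ∨
        ∃ r, sim exNet t Node.e = some r ∧ r.tag = true) := by
  exact ⟨ic, indc, fun t => sound exNet A17 ic indc t Node.e⟩
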